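/- The pair (A, B), where A = W_Box(T,>0) ∩ Γ and B = W_Box(T_ε,>0) ∩ Γ in a stochastic BPA game with simple target set T, is the least fixed point of the monotone operator F on 2^Γ × 2^Γ given by F(A,B) = (Â,B̂) with Â = Γ_T ∪ A ∪ {X ∈ Γ_Box ∪ Γ_Circle : ∃ rule X→β with β ∈ B*AΓ*} ∪ {X ∈ Γ_Diamond : ∀ rules X→β, β ∈ B*AΓ*}, and B̂ = Γ_T ∪ B ∪ {X ∈ Γ_Box ∪ Γ_Circle : ∃ rule X→β with β ∈ B*AΓ* ∪ B*} ∪ {X ∈ Γ_Diamond : ∀ rules X→β, β ∈ B*AΓ* ∪ B*}. -/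

import Mathlib

/-!
Box wins `Reach(T)` with positive probability exactly on the alternating attractor of `T`:
following the attractor ranks yields a positive-probability path to `T` against every Diamond
strategy, while outside the attractor Diamond can always stay outside. Rewriting in a BPA only
touches the top symbol, so attractors compose: if `u ∈ Attr(T_ε)` and `v ∈ Attr(T)` then
`uv ∈ Attr(T)`. Hence `B*AΓ* ⊆ Attr(T)` and `B* ⊆ Attr(T_ε)`, which makes `(A, B)` a fixed point
of `F`. Conversely, for a pre-fixed point `p` of `F`, induction on the attractor rank puts
`Attr(T)` inside `p₂*p₁Γ*` and `Attr(T_ε)` inside `p₂*p₁Γ* ∪ p₂*`.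
-/

open scoped Classical

/-- A stochastic BPA game: finite stack alphabet `Γ`, rules `X → α` with
`|α| ≤ 2`, symbols partitioned among player Box, player Diamond, and
probabilistic symbols, the latter carrying positive rational distributions
over their rules. -/
structure BPA (Γ : Type*) [Fintype Γ] where
  rule : Γ → List Γ → Prop
  rule_len : ∀ X α, rule X α → α.length ≤ 2
  rule_total : ∀ X, ∃ α, rule X α
  isBox : Γ → Prop
  isDiamond : Γ → Prop
  isCirc : Γ → Prop
  cover : ∀ X, isBox X ∨ isDiamond X ∨ isCirc X
  disjBD : ∀ X, ¬ (isBox X ∧ isDiamond X)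
  disjBC : ∀ X, ¬ (isBox X ∧ isCirc X)
  disjDC : ∀ X, ¬ (isDiamond X ∧ isCirc X)
  prob : Γ → List Γ → ℝ
  prob_nonneg : ∀ X α, 0 ≤ prob X α
  prob_rat : ∀ X α, ∃ q : ℚ, prob X α = (q : ℝ)
  prob_supp : ∀ X α, isCirc X → (0 < prob X α ↔ rule X α)
  prob_sum : ∀ X, isCirc X → ∑' α, prob X α = 1

variable {Γ : Type*} [Fintype Γ]

/-- A history-dependent randomized strategy for the player owning the symbols
satisfying `own` in the stochastic game induced by a BPA game: to every history
(sequence of configurations) and current configuration `X :: β` with `own X`,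
it assigns a probability distribution on the applicable rules. -/
structure BPA.Strat (Δ : BPA Γ) (own : Γ → Prop) where
  f : List (List Γ) → List Γ → List Γ → ℝ
  nonneg : ∀ w c α, 0 ≤ f w c α
  supp : ∀ w X β α, own X → f w (X :: β) α ≠ 0 → Δ.rule X α
  sum_one : ∀ w X β, own X → ∑' α, f w (X :: β) α = 1

/-- The distribution on rules chosen at configuration `c` after history `w`. -/
noncomputable def BPA.choice (Δ : BPA Γ) (σ : Δ.Strat Δ.isBox)
    (π : Δ.Strat Δ.isDiamond) (w : List (List Γ)) (c : List Γ) (α : List Γ) : ℝ :=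
  match c with
  | [] => 0
  | X :: _ => if Δ.isBox X then σ.f w c α else if Δ.isDiamond X then π.f w c α
      else Δ.prob X α

/-- One-step transition probability between configurations in the play
induced by a BPA game (the empty configuration `ε` loops with probability 1,
and `X :: β` moves to `α ++ β` for a rule `X → α`). -/
noncomputable def BPA.stepP (Δ : BPA Γ) (σ : Δ.Strat Δ.isBox)
    (π : Δ.Strat Δ.isDiamond) (w : List (List Γ)) (c c' : List Γ) : ℝ :=
  match c with
  | [] => if c' = [] then 1 else 0
  | X :: β => ∑' α : List Γ,
      if α ++ β = c' ∧ Δ.rule X α then Δ.choice σ π w (X :: β) α else 0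

/-- Probability of reaching `T` from configuration `c` within at most `n`
transitions, after history `w`. -/
noncomputable def BPA.reachN (Δ : BPA Γ) (σ : Δ.Strat Δ.isBox)
    (π : Δ.Strat Δ.isDiamond) (T : Set (List Γ)) :
    ℕ → List (List Γ) → List Γ → ℝ
  | 0, _, c => if c ∈ T then 1 else 0
  | n+1, w, c => if c ∈ T then 1 else
      ∑' c', Δ.stepP σ π w c c' * BPA.reachN Δ σ π T n (w ++ [c]) c'

/-- Probability `P_c^{σ,π}(Reach(T))` of reaching `T` from configuration `c`. -/
noncomputable def BPA.reachP (Δ : BPA Γ) (σ : Δ.Strat Δ.isBox)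
    (π : Δ.Strat Δ.isDiamond) (T : Set (List Γ)) (c : List Γ) : ℝ :=
  ⨆ n, Δ.reachN σ π T n [] c

/-- The winning region `W_Box(T, >0)`. -/
def BPA.WBoxPos (Δ : BPA Γ) (T : Set (List Γ)) : Set (List Γ) :=
  {c | ∃ σ : Δ.Strat Δ.isBox, ∀ π : Δ.Strat Δ.isDiamond, 0 < Δ.reachP σ π T c}

/-- The winning region `W_Box(T, =1)`. -/
def BPA.WBoxOne (Δ : BPA Γ) (T : Set (List Γ)) : Set (List Γ) :=
  {c | ∃ σ : Δ.Strat Δ.isBox, ∀ π : Δ.Strat Δ.isDiamond, Δ.reachP σ π T c = 1}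

/-- The winning region `W_Diamond(T, =0)`. -/
def BPA.WDiaZero (Δ : BPA Γ) (T : Set (List Γ)) : Set (List Γ) :=
  {c | ∃ π : Δ.Strat Δ.isDiamond, ∀ σ : Δ.Strat Δ.isBox, Δ.reachP σ π T c = 0}

/-- The winning region `W_Diamond(T, <1)`. -/
def BPA.WDiaLtOne (Δ : BPA Γ) (T : Set (List Γ)) : Set (List Γ) :=
  {c | ∃ π : Δ.Strat Δ.isDiamond, ∀ σ : Δ.Strat Δ.isBox, Δ.reachP σ π T c < 1}

/-- The language `{[X] : X ∈ S}` of one-letter words over a set of symbols. -/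
def symLang (S : Set Γ) : Language Γ := {c | ∃ X ∈ S, c = [X]}

/-- The simple set of target configurations `S·Γ*` determined by the set of
symbols `S`: membership depends only on the top stack symbol, and `ε ∉ S·Γ*`. -/
def topLang (S : Set Γ) : Language Γ := {c | ∃ X β, c = X :: β ∧ X ∈ S}


/-- The operator `F` from Proposition 5.2: `F(A,B) = (Â, B̂)`. -/
def Fop (Δ : BPA Γ) (ΓT : Set Γ) (p : Set Γ × Set Γ) : Set Γ × Set Γ :=
  (ΓT ∪ p.1 ∪
      {X | (Δ.isBox X ∨ Δ.isCirc X) ∧ ∃ β, Δ.rule X β ∧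
        β ∈ KStar.kstar (symLang p.2) * symLang p.1 * (⊤ : Language Γ)} ∪
      {X | Δ.isDiamond X ∧ ∀ β, Δ.rule X β →
        β ∈ KStar.kstar (symLang p.2) * symLang p.1 * (⊤ : Language Γ)},
   ΓT ∪ p.2 ∪
      {X | (Δ.isBox X ∨ Δ.isCirc X) ∧ ∃ β, Δ.rule X β ∧
        β ∈ KStar.kstar (symLang p.2) * symLang p.1 * (⊤ : Language Γ)
              + KStar.kstar (symLang p.2)} ∪
      {X | Δ.isDiamond X ∧ ∀ β, Δ.rule X β →
        β ∈ KStar.kstar (symLang p.2) * symLang p.1 * (⊤ : Language Γ)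
              + KStar.kstar (symLang p.2)})

section Words

variable {Γ : Type*} {A B : Set Γ}

/-- The language `B*AΓ*`. -/
def starPrefixed (B A : Set Γ) : Set (List Γ) :=
  {c | ∃ b a t, c = b ++ a :: t ∧ (∀ x ∈ b, x ∈ B) ∧ a ∈ A}

lemma mem_kstar_symLang {c : List Γ} : c ∈ KStar.kstar (symLang B) ↔ ∀ x ∈ c, x ∈ B := by
  rw [Language.mem_kstar]
  constructor
  · rintro ⟨L, rfl, hL⟩ x hx
    obtain ⟨l, hl, hxl⟩ := List.mem_flatten.1 hx
    obtain ⟨y, hy, rfl⟩ := hL l hl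
    exact List.mem_singleton.1 hxl ▸ hy
  · intro h
    refine ⟨c.map ([·]), (List.flatMap_singleton' c).symm, ?_⟩
    simp only [List.mem_map]
    rintro _ ⟨x, hx, rfl⟩
    exact ⟨x, h x hx, rfl⟩

lemma mem_kstar_mul_symLang_mul_top {c : List Γ} :
    c ∈ KStar.kstar (symLang B) * symLang A * (⊤ : Language Γ) ↔ c ∈ starPrefixed B A := by
  simp only [Language.mem_mul, mem_kstar_symLang]
  constructor
  · rintro ⟨_, ⟨b, hb, _, ⟨a, ha, rfl⟩, rfl⟩, t, -, rfl⟩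
    exact ⟨b, a, t, by simp, hb, ha⟩
  · rintro ⟨b, a, t, rfl, hb, ha⟩
    exact ⟨b ++ [a], ⟨b, hb, [a], ⟨a, ha, rfl⟩, rfl⟩, t, trivial, by simp⟩

lemma cons_mem_starPrefixed_of_mem {a : Γ} (ha : a ∈ A) (t : List Γ) :
    a :: t ∈ starPrefixed B A :=
  ⟨[], a, t, rfl, by simp, ha⟩

lemma cons_mem_starPrefixed {x : Γ} {t : List Γ} (hx : x ∈ B) (ht : t ∈ starPrefixed B A) :
    x :: t ∈ starPrefixed B A := by
  obtain ⟨b, a, s, rfl, hb, ha⟩ := ht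
  exact ⟨x :: b, a, s, rfl, by simpa [hx] using hb, ha⟩

lemma singleton_mem_starPrefixed {X : Γ} : [X] ∈ starPrefixed B A ↔ X ∈ A := by
  refine ⟨?_, fun hX => cons_mem_starPrefixed_of_mem hX []⟩
  rintro ⟨_ | ⟨y, b⟩, a, t, h, -, ha⟩
  · exact (List.cons_eq_cons.1 h).1 ▸ ha
  · simp at h

lemma append_mem_starPrefixed {α β : List Γ} :
    α ++ β ∈ starPrefixed B A ↔
      α ∈ starPrefixed B A ∨ (∀ x ∈ α, x ∈ B) ∧ β ∈ starPrefixed B A := by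
  constructor
  · rintro ⟨b, a, t, h, hb, ha⟩
    rcases List.append_eq_append_iff.1 h with ⟨w, rfl, rfl⟩ | ⟨_ | ⟨y, w⟩, rfl, hw⟩
    · exact Or.inr ⟨fun x hx => hb x (by simp [hx]), w, a, t, rfl,
        fun x hx => hb x (by simp [hx]), ha⟩
    · exact Or.inr ⟨by simpa using hb, [], a, t, by simpa using hw.symm, by simp, ha⟩
    · obtain ⟨rfl, rfl⟩ := List.cons_eq_cons.1 hw
      exact Or.inl ⟨b, a, w, rfl, hb, ha⟩
  · rintro (⟨b, a, t, rfl, hb, ha⟩ | ⟨hα, b, a, t, rfl, hb, ha⟩)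
    · exact ⟨b, a, t ++ β, by simp, hb, ha⟩
    · exact ⟨α ++ b, a, t, by simp, fun x hx => (List.mem_append.1 hx).elim (hα x) (hb x), ha⟩

lemma cons_mem_starPrefixed_union {x : Γ} {t : List Γ} (hx : x ∈ B)
    (ht : t ∈ starPrefixed B A ∪ {c | ∀ y ∈ c, y ∈ B}) :
    x :: t ∈ starPrefixed B A ∪ {c | ∀ y ∈ c, y ∈ B} := by
  rcases ht with ht | ht
  · exact Or.inl (cons_mem_starPrefixed hx ht)
  · exact Or.inr (by simpa [hx] using ht)

lemma topLang_append {ΓT : Set Γ} {s : List Γ} (hs : s ∈ topLang ΓT) (γ : List Γ) :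
    s ++ γ ∈ topLang ΓT := by
  obtain ⟨X, β, rfl, hX⟩ := hs
  exact ⟨X, β ++ γ, rfl, hX⟩

end Words

namespace BPA

variable {Δ : BPA Γ}

/-- The symbols whose rewriting Box can force into `L` with positive probability. -/
def cpre (Δ : BPA Γ) (L : Set (List Γ)) : Set Γ :=
  {X | (Δ.isBox X ∨ Δ.isCirc X) ∧ ∃ α, Δ.rule X α ∧ α ∈ L} ∪
    {X | Δ.isDiamond X ∧ ∀ α, Δ.rule X α → α ∈ L}

lemma cpre_mono {L L' : Set (List Γ)} (h : L ⊆ L') : Δ.cpre L ⊆ Δ.cpre L' := by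
  rintro X (⟨hX, α, hα, hL⟩ | ⟨hX, hall⟩)
  · exact Or.inl ⟨hX, α, hα, h hL⟩
  · exact Or.inr ⟨hX, fun α hα => h (hall α hα)⟩

lemma rule_finite (Δ : BPA Γ) (X : Γ) : {α | Δ.rule X α}.Finite :=
  (List.finite_length_le Γ 2).subset fun α => Δ.rule_len X α

lemma cpre_iUnion_subset {S : ℕ → Set (List Γ)} (hS : Monotone S) :
    Δ.cpre (⋃ n, S n) ⊆ ⋃ n, Δ.cpre (S n) := by
  rintro X (⟨hX, α, hα, hL⟩ | ⟨hX, hall⟩)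
  · obtain ⟨n, hn⟩ := Set.mem_iUnion.1 hL
    exact Set.mem_iUnion.2 ⟨n, Or.inl ⟨hX, α, hα, hn⟩⟩
  · have hfin := Δ.rule_finite X
    obtain ⟨n, hn⟩ := hS.directed_le.exists_mem_subset_of_finset_subset_biUnion
      (s := hfin.toFinset) (by simpa [Set.subset_def] using hall)
    exact Set.mem_iUnion.2 ⟨n, Or.inr ⟨hX, fun α hα => hn (by simpa using hα)⟩⟩

def attrStep (Δ : BPA Γ) (T S : Set (List Γ)) : Set (List Γ) :=
  T ∪ {c | ∃ X β, c = X :: β ∧ X ∈ Δ.cpre {α | α ++ β ∈ S}}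

def attrN (Δ : BPA Γ) (T : Set (List Γ)) : ℕ → Set (List Γ)
  | 0 => ∅
  | n + 1 => Δ.attrStep T (Δ.attrN T n)

def attr (Δ : BPA Γ) (T : Set (List Γ)) : Set (List Γ) := ⋃ n, Δ.attrN T n

lemma attrStep_mono {T T' S S' : Set (List Γ)} (hT : T ⊆ T') (hS : S ⊆ S') :
    Δ.attrStep T S ⊆ Δ.attrStep T' S' := by
  rintro c (hc | ⟨X, β, rfl, hX⟩)
  · exact Or.inl (hT hc)
  · exact Or.inr ⟨X, β, rfl, cpre_mono (Set.preimage_mono (f := (· ++ β)) hS) hX⟩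

lemma monotone_attrN (T : Set (List Γ)) : Monotone (Δ.attrN T) := by
  refine monotone_nat_of_le_succ fun n => ?_
  induction n with
  | zero => exact Set.empty_subset _
  | succ n ih => exact attrStep_mono subset_rfl ih

lemma attrN_subset_attr (T : Set (List Γ)) (n : ℕ) : Δ.attrN T n ⊆ Δ.attr T :=
  Set.subset_iUnion (Δ.attrN T) n

lemma subset_attr (T : Set (List Γ)) : T ⊆ Δ.attr T :=
  fun _ hc => attrN_subset_attr T 1 (Or.inl hc)

lemma attr_mono {T T' : Set (List Γ)} (hT : T ⊆ T') : Δ.attr T ⊆ Δ.attr T' := by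
  refine Set.iUnion_mono fun n => ?_
  induction n with
  | zero => exact subset_rfl
  | succ n ih => exact attrStep_mono hT ih

lemma cons_mem_attr {T : Set (List Γ)} {X : Γ} {β : List Γ}
    (hX : X ∈ Δ.cpre {α | α ++ β ∈ Δ.attr T}) : X :: β ∈ Δ.attr T := by
  have hpre : {α | α ++ β ∈ Δ.attr T} = ⋃ n, {α | α ++ β ∈ Δ.attrN T n} := by
    ext α; simp [attr]
  rw [hpre] at hX
  obtain ⟨n, hn⟩ := Set.mem_iUnion.1
    (cpre_iUnion_subset (S := fun n => {α | α ++ β ∈ Δ.attrN T n})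
      (fun _ _ h _ hα => monotone_attrN T h hα) hX)
  exact attrN_subset_attr T (n + 1) (Or.inr ⟨X, β, rfl, hn⟩)

section Play

variable (σ : Δ.Strat Δ.isBox) (π : Δ.Strat Δ.isDiamond) (w : List (List Γ))

lemma choice_of_isBox {X : Γ} (β α : List Γ) (hX : Δ.isBox X) :
    Δ.choice σ π w (X :: β) α = σ.f w (X :: β) α := by
  simp [choice, hX]

lemma choice_of_isDiamond {X : Γ} (β α : List Γ) (hX : Δ.isDiamond X) :
    Δ.choice σ π w (X :: β) α = π.f w (X :: β) α := by
  have hB : ¬Δ.isBox X := fun h => Δ.disjBD X ⟨h, hX⟩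
  simp [choice, hB, hX]

lemma choice_of_isCirc {X : Γ} (β α : List Γ) (hX : Δ.isCirc X) :
    Δ.choice σ π w (X :: β) α = Δ.prob X α := by
  have hB : ¬Δ.isBox X := fun h => Δ.disjBC X ⟨h, hX⟩
  have hD : ¬Δ.isDiamond X := fun h => Δ.disjDC X ⟨h, hX⟩
  simp [choice, hB, hD]

lemma choice_nonneg (c α : List Γ) : 0 ≤ Δ.choice σ π w c α := by
  rcases c with _ | ⟨X, β⟩
  · exact le_rfl
  · dsimp only [choice]
    split_ifs
    exacts [σ.nonneg .., π.nonneg .., Δ.prob_nonneg ..]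

lemma rule_of_choice_ne_zero {X : Γ} {β α : List Γ} (h : Δ.choice σ π w (X :: β) α ≠ 0) :
    Δ.rule X α := by
  rcases Δ.cover X with hX | hX | hX
  · exact σ.supp w X β α hX (by rwa [choice_of_isBox σ π w β α hX] at h)
  · exact π.supp w X β α hX (by rwa [choice_of_isDiamond σ π w β α hX] at h)
  · rw [choice_of_isCirc σ π w β α hX] at h
    exact (Δ.prob_supp X α hX).1 ((Δ.prob_nonneg X α).lt_of_ne' h)

lemma hasSum_choice (X : Γ) (β : List Γ) : HasSum (Δ.choice σ π w (X :: β)) 1 := by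
  have hsum : ∑' α, Δ.choice σ π w (X :: β) α = 1 := by
    rcases Δ.cover X with hX | hX | hX
    · simpa only [choice_of_isBox σ π w β _ hX] using σ.sum_one w X β hX
    · simpa only [choice_of_isDiamond σ π w β _ hX] using π.sum_one w X β hX
    · simpa only [choice_of_isCirc σ π w β _ hX] using Δ.prob_sum X hX
  refine hsum ▸ (Summable.hasSum ?_)
  by_contra h
  simp [tsum_eq_zero_of_not_summable h] at hsum

lemma stepP_cons_append (X : Γ) (α β : List Γ) :
    Δ.stepP σ π w (X :: β) (α ++ β) = Δ.choice σ π w (X :: β) α := by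
  rw [stepP, tsum_eq_single α fun α' hα' => if_neg fun h => hα' (List.append_cancel_right h.1)]
  by_cases hα : Δ.rule X α
  · simp [hα]
  · simp only [hα]
    exact (not_not.1 (mt (rule_of_choice_ne_zero σ π w) hα)).symm

lemma stepP_cons_eq_zero (X : Γ) (β : List Γ) {c' : List Γ} (h : c' ∉ Set.range (· ++ β)) :
    Δ.stepP σ π w (X :: β) c' = 0 :=
  (tsum_congr fun α => if_neg fun hα => h ⟨α, hα.1⟩).trans tsum_zero

lemma exists_choice_ne_zero_of_stepP_ne_zero {X : Γ} {β c' : List Γ}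
    (h : Δ.stepP σ π w (X :: β) c' ≠ 0) :
    ∃ α, c' = α ++ β ∧ Δ.choice σ π w (X :: β) α ≠ 0 := by
  obtain ⟨α, rfl⟩ : c' ∈ Set.range (· ++ β) :=
    by_contra fun hc => h (stepP_cons_eq_zero σ π w X β hc)
  exact ⟨α, rfl, by rwa [stepP_cons_append] at h⟩

lemma hasSum_stepP (c : List Γ) : HasSum (Δ.stepP σ π w c) 1 := by
  rcases c with _ | ⟨X, β⟩
  · exact hasSum_ite_eq [] 1
  · rw [← (List.append_left_injective β).hasSum_iff fun c' hc' => stepP_cons_eq_zero σ π w X β hc']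
    convert hasSum_choice σ π w X β using 1
    exact funext fun α => stepP_cons_append σ π w X α β

lemma stepP_nonneg (c c' : List Γ) : 0 ≤ Δ.stepP σ π w c c' := by
  rcases c with _ | ⟨X, β⟩
  · unfold stepP; split_ifs <;> norm_num
  · exact tsum_nonneg fun α => by split_ifs <;> simp [choice_nonneg]

end Play

section Reach

variable (σ : Δ.Strat Δ.isBox) (π : Δ.Strat Δ.isDiamond) (T : Set (List Γ))

lemma summable_stepP_mul (w : List (List Γ)) (c : List Γ) {g : List Γ → ℝ}
    (hg : ∀ c', g c' ∈ Set.Icc 0 1) : Summable fun c' => Δ.stepP σ π w c c' * g c' :=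
  (hasSum_stepP σ π w c).summable.of_nonneg_of_le
    (fun c' => mul_nonneg (stepP_nonneg σ π w c c') (hg c').1)
    (fun c' => mul_le_of_le_one_right (stepP_nonneg σ π w c c') (hg c').2)

lemma reachN_mem_Icc (n : ℕ) (w : List (List Γ)) (c : List Γ) :
    Δ.reachN σ π T n w c ∈ Set.Icc 0 1 := by
  induction n generalizing w c with
  | zero => unfold reachN; split_ifs <;> simp
  | succ n ih =>
    unfold reachN
    split_ifs
    · simp
    refine ⟨tsum_nonneg fun c' => mul_nonneg (stepP_nonneg σ π w c c') (ih _ c').1, ?_⟩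
    exact hasSum_le (fun c' => mul_le_of_le_one_right (stepP_nonneg σ π w c c') (ih _ c').2)
      (summable_stepP_mul σ π w c (ih _)).hasSum (hasSum_stepP σ π w c)

lemma stepP_mul_reachN_le_reachN_succ {n : ℕ} {w : List (List Γ)} {c : List Γ} (hc : c ∉ T)
    (c' : List Γ) :
    Δ.stepP σ π w c c' * Δ.reachN σ π T n (w ++ [c]) c' ≤ Δ.reachN σ π T (n + 1) w c := by
  rw [reachN, if_neg hc]
  exact (summable_stepP_mul σ π w c (reachN_mem_Icc σ π T n _)).le_tsum c' fun c'' _ =>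
    mul_nonneg (stepP_nonneg σ π w c c'') (reachN_mem_Icc σ π T n _ c'').1

lemma reachN_le_reachP (n : ℕ) (c : List Γ) : Δ.reachN σ π T n [] c ≤ Δ.reachP σ π T c :=
  le_ciSup ⟨1, Set.forall_mem_range.2 fun m => (reachN_mem_Icc σ π T m [] c).2⟩ n

end Reach

noncomputable def Strat.ofPick (own : Γ → Prop) (pick : Γ → List Γ → List Γ)
    (hpick : ∀ X β, Δ.rule X (pick X β)) : Δ.Strat own where
  f _ c α := match c with
    | [] => 0
    | X :: β => if α = pick X β then 1 else 0
  nonneg _ c α := by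
    rcases c with _ | ⟨X, β⟩
    · exact le_rfl
    · exact ite_nonneg zero_le_one le_rfl
  supp _ X β α _ h := by
    dsimp only at h
    split_ifs at h with hα
    · exact hα ▸ hpick X β
    · exact absurd rfl h
  sum_one _ X β _ := tsum_ite_eq (pick X β) 1

lemma Strat.ofPick_f_cons (own : Γ → Prop) (pick : Γ → List Γ → List Γ)
    (hpick : ∀ X β, Δ.rule X (pick X β)) (w : List (List Γ)) (X : Γ) (β α : List Γ) :
    (Strat.ofPick own pick hpick).f w (X :: β) α = if α = pick X β then 1 else 0 := rfl

section Strategies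

variable (T : Set (List Γ))

lemma exists_rule_attrN_descent (Δ : BPA Γ) (X : Γ) (β : List Γ) :
    ∃ α, Δ.rule X α ∧ ∀ n, X :: β ∈ Δ.attrN T (n + 1) → X :: β ∉ T → Δ.isBox X →
      α ++ β ∈ Δ.attrN T n := by
  by_cases h : ∃ n, X :: β ∈ Δ.attrN T (n + 1) ∧ X :: β ∉ T ∧ Δ.isBox X
  · obtain ⟨hmem, hT, hB⟩ := Nat.find_spec h
    rcases hmem with hc | ⟨_, _, hc, hX⟩
    · exact absurd hc hT
    obtain ⟨rfl, rfl⟩ := List.cons_eq_cons.1 hc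
    rcases hX with ⟨-, α, hα, hα'⟩ | ⟨hD, -⟩
    · exact ⟨α, hα, fun n hn hT hB => monotone_attrN T (Nat.find_min' h ⟨hn, hT, hB⟩) hα'⟩
    · exact absurd ⟨hB, hD⟩ (Δ.disjBD _)
  · obtain ⟨α, hα⟩ := Δ.rule_total X
    exact ⟨α, hα, fun n hn hT hB => absurd ⟨n, hn, hT, hB⟩ h⟩

/-- Box's attractor strategy: from a configuration of rank `n + 1` it moves to rank `n`. -/
noncomputable def attrStrat (Δ : BPA Γ) : Δ.Strat Δ.isBox :=
  Strat.ofPick _ (fun X β => (Δ.exists_rule_attrN_descent T X β).choose)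
    fun X β => (Δ.exists_rule_attrN_descent T X β).choose_spec.1

lemma exists_rule_not_mem_attr (Δ : BPA Γ) (X : Γ) (β : List Γ) :
    ∃ α, Δ.rule X α ∧ (Δ.isDiamond X → X :: β ∉ Δ.attr T → α ++ β ∉ Δ.attr T) := by
  by_cases h : Δ.isDiamond X ∧ X :: β ∉ Δ.attr T
  · by_contra! hall
    exact h.2 (cons_mem_attr (Or.inr ⟨h.1, fun α hα => (hall α hα).2.2⟩))
  · obtain ⟨α, hα⟩ := Δ.rule_total X
    exact ⟨α, hα, fun hD hc => absurd ⟨hD, hc⟩ h⟩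

noncomputable def avoidStrat (Δ : BPA Γ) : Δ.Strat Δ.isDiamond :=
  Strat.ofPick _ (fun X β => (Δ.exists_rule_not_mem_attr T X β).choose)
    fun X β => (Δ.exists_rule_not_mem_attr T X β).choose_spec.1

variable {T}

lemma not_mem_attr_of_stepP_avoidStrat_ne_zero (σ : Δ.Strat Δ.isBox) {w : List (List Γ)}
    {c c' : List Γ} (hc : c ∉ Δ.attr T) (h : Δ.stepP σ (Δ.avoidStrat T) w c c' ≠ 0) :
    c' ∉ Δ.attr T := by
  rcases c with _ | ⟨X, β⟩
  · obtain rfl : c' = [] := by_contra fun hc' => h (if_neg hc')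
    exact hc
  obtain ⟨α, rfl, hα⟩ := exists_choice_ne_zero_of_stepP_ne_zero σ _ w h
  have hrule := rule_of_choice_ne_zero σ _ w hα
  rcases Δ.cover X with hX | hX | hX
  · exact fun hmem => hc (cons_mem_attr (Or.inl ⟨Or.inl hX, α, hrule, hmem⟩))
  · rw [choice_of_isDiamond σ _ w β α hX, avoidStrat, Strat.ofPick_f_cons] at hα
    obtain rfl : α = _ := by_contra fun hne => hα (if_neg hne)
    exact (Δ.exists_rule_not_mem_attr T X β).choose_spec.2 hX hc
  · exact fun hmem => hc (cons_mem_attr (Or.inl ⟨Or.inr hX, α, hrule, hmem⟩))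

lemma reachN_avoidStrat_eq_zero (σ : Δ.Strat Δ.isBox) (n : ℕ) (w : List (List Γ))
    {c : List Γ} (hc : c ∉ Δ.attr T) : Δ.reachN σ (Δ.avoidStrat T) T n w c = 0 := by
  induction n generalizing w c with
  | zero => rw [reachN, if_neg fun h => hc (subset_attr T h)]
  | succ n ih =>
    rw [reachN, if_neg fun h => hc (subset_attr T h)]
    refine (tsum_congr fun c' => ?_).trans tsum_zero
    by_cases h : Δ.stepP σ (Δ.avoidStrat T) w c c' = 0
    · rw [h, zero_mul]
    · rw [ih _ (not_mem_attr_of_stepP_avoidStrat_ne_zero σ hc h), mul_zero]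

lemma exists_stepP_attrStrat_pos (π : Δ.Strat Δ.isDiamond) {n : ℕ} {w : List (List Γ)}
    {c : List Γ} (hc : c ∈ Δ.attrN T (n + 1)) (hT : c ∉ T) :
    ∃ c' ∈ Δ.attrN T n, 0 < Δ.stepP (Δ.attrStrat T) π w c c' := by
  rcases id hc with hc' | ⟨X, β, rfl, hX⟩
  · exact absurd hc' hT
  rcases hX with ⟨hB | hC, α, hα, hmem⟩ | ⟨hD, hall⟩
  · refine ⟨_, (Δ.exists_rule_attrN_descent T X β).choose_spec.2 n hc hT hB, ?_⟩
    rw [stepP_cons_append, choice_of_isBox _ _ _ _ _ hB, attrStrat, Strat.ofPick_f_cons,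
      if_pos rfl]
    exact one_pos
  · refine ⟨α ++ β, hmem, ?_⟩
    rw [stepP_cons_append, choice_of_isCirc _ _ _ _ _ hC]
    exact (Δ.prob_supp X α hC).2 hα
  · obtain ⟨α, hα⟩ : ∃ α, π.f w (X :: β) α ≠ 0 := by
      by_contra! h
      simpa [h] using π.sum_one w X β hD
    refine ⟨α ++ β, hall α (π.supp w X β α hD hα), ?_⟩
    rw [stepP_cons_append, choice_of_isDiamond _ _ _ _ _ hD]
    exact (π.nonneg _ _ _).lt_of_ne' hα

lemma reachN_attrStrat_pos (π : Δ.Strat Δ.isDiamond) {n : ℕ} {w : List (List Γ)}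
    {c : List Γ} (hc : c ∈ Δ.attrN T n) : 0 < Δ.reachN (Δ.attrStrat T) π T n w c := by
  induction n generalizing w c with
  | zero => exact absurd hc (Set.notMem_empty c)
  | succ n ih =>
    by_cases hT : c ∈ T
    · rw [reachN, if_pos hT]
      exact one_pos
    obtain ⟨c', hc', hpos⟩ := exists_stepP_attrStrat_pos π (w := w) hc hT
    exact (mul_pos hpos (ih hc')).trans_le (stepP_mul_reachN_le_reachN_succ _ π T hT c')

theorem WBoxPos_eq_attr (Δ : BPA Γ) (T : Set (List Γ)) : Δ.WBoxPos T = Δ.attr T := by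
  ext c
  constructor
  · rintro ⟨σ, hσ⟩
    by_contra hc
    have h0 : Δ.reachP σ (Δ.avoidStrat T) T c = 0 := by
      simp only [reachP, reachN_avoidStrat_eq_zero σ _ _ hc, ciSup_const]
    exact (hσ _).ne' h0
  · intro hc
    obtain ⟨n, hn⟩ := Set.mem_iUnion.1 hc
    exact ⟨Δ.attrStrat T, fun π =>
      (reachN_attrStrat_pos π hn).trans_le (reachN_le_reachP _ π T n c)⟩

end Strategies

lemma append_mem_attr {T U : Set (List Γ)} {γ : List Γ} (hT : ∀ s ∈ T, s ++ γ ∈ Δ.attr U)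
    {c : List Γ} (hc : c ∈ Δ.attr T) : c ++ γ ∈ Δ.attr U := by
  obtain ⟨n, hn⟩ := Set.mem_iUnion.1 hc
  induction n generalizing c with
  | zero => exact absurd hn (Set.notMem_empty c)
  | succ n ih =>
    rcases hn with hc | ⟨X, β, rfl, hX⟩
    · exact hT c hc
    · refine cons_mem_attr (cpre_mono (fun α (hα : α ++ β ∈ Δ.attrN T n) => ?_) hX)
      simpa using ih (attrN_subset_attr T n hα) hα

lemma append_mem_attr_of_mem_attr_union_nil {T U : Set (List Γ)}
    (hT : ∀ s ∈ T, ∀ γ, s ++ γ ∈ U) {c γ : List Γ} (hc : c ∈ Δ.attr (T ∪ {[]}))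
    (hγ : γ ∈ Δ.attr U) : c ++ γ ∈ Δ.attr U := by
  refine append_mem_attr (fun s hs => ?_) hc
  rcases hs with hs | rfl
  · exact subset_attr U (hT s hs γ)
  · exact hγ

lemma cpre_subset_of_subset_attr {L U : Set (List Γ)} (hL : L ⊆ Δ.attr U) :
    Δ.cpre L ⊆ {X | [X] ∈ Δ.attr U} :=
  fun _ hX => cons_mem_attr (cpre_mono (fun α hα => by simpa using hL hα) hX)

end BPA

section FixedPoint

open BPA

variable {Δ : BPA Γ} {ΓT : Set Γ}

lemma Fop_eq (Δ : BPA Γ) (ΓT : Set Γ) (p : Set Γ × Set Γ) :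
    Fop Δ ΓT p = (ΓT ∪ p.1 ∪ Δ.cpre (starPrefixed p.2 p.1),
      ΓT ∪ p.2 ∪ Δ.cpre (starPrefixed p.2 p.1 ∪ {c | ∀ x ∈ c, x ∈ p.2})) := by
  simp only [Fop, cpre, Set.union_assoc, Language.mem_add, mem_kstar_mul_symLang_mul_top,
    mem_kstar_symLang]
  rfl

lemma starPrefixed_subset_attr :
    starPrefixed {X | [X] ∈ Δ.attr (topLang ΓT ∪ {[]})} {X | [X] ∈ Δ.attr (topLang ΓT)} ⊆
      Δ.attr (topLang ΓT) := by
  rintro _ ⟨b, a, t, rfl, hb, ha⟩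
  induction b with
  | nil => exact append_mem_attr (fun s hs => subset_attr _ (topLang_append hs t)) ha
  | cons y b ih =>
    exact append_mem_attr_of_mem_attr_union_nil (c := [y]) (fun s hs => topLang_append hs)
      (hb y (by simp)) (ih fun x hx => hb x (by simp [hx]))

lemma mem_attr_topLang_union_nil_of_forall {c : List Γ}
    (hc : ∀ x ∈ c, [x] ∈ Δ.attr (topLang ΓT ∪ {[]})) :
    c ∈ Δ.attr (topLang ΓT ∪ {[]}) := by
  induction c with
  | nil => exact subset_attr _ (Or.inr rfl)
  | cons y c ih =>
    exact append_mem_attr_of_mem_attr_union_nil (c := [y])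
      (fun s hs γ => Or.inl (topLang_append hs γ)) (hc y (by simp))
      (ih fun x hx => hc x (by simp [hx]))

theorem Fop_attr_eq (Δ : BPA Γ) (ΓT : Set Γ) :
    Fop Δ ΓT ({X | [X] ∈ Δ.attr (topLang ΓT)}, {X | [X] ∈ Δ.attr (topLang ΓT ∪ {[]})}) =
      ({X | [X] ∈ Δ.attr (topLang ΓT)}, {X | [X] ∈ Δ.attr (topLang ΓT ∪ {[]})}) := by
  have hΓT : ΓT ⊆ {X | [X] ∈ Δ.attr (topLang ΓT)} :=
    fun X hX => subset_attr _ ⟨X, [], rfl, hX⟩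
  rw [Fop_eq]
  refine Prod.ext (subset_antisymm ?_ (Set.subset_union_right.trans Set.subset_union_left))
    (subset_antisymm ?_ (Set.subset_union_right.trans Set.subset_union_left))
  · refine Set.union_subset (Set.union_subset hΓT subset_rfl) ?_
    exact cpre_subset_of_subset_attr starPrefixed_subset_attr
  · refine Set.union_subset (Set.union_subset (hΓT.trans ?_) subset_rfl) ?_
    · exact fun X hX => attr_mono Set.subset_union_left hX
    · refine cpre_subset_of_subset_attr
        (Set.union_subset ?_ fun _ hc => mem_attr_topLang_union_nil_of_forall hc)
      exact starPrefixed_subset_attr.trans (attr_mono Set.subset_union_left)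

variable {A B : Set Γ}

lemma Fop_le_iff {p : Set Γ × Set Γ} :
    Fop Δ ΓT p ≤ p ↔ (ΓT ⊆ p.1 ∧ Δ.cpre (starPrefixed p.2 p.1) ⊆ p.1) ∧
      ΓT ⊆ p.2 ∧ Δ.cpre (starPrefixed p.2 p.1 ∪ {c | ∀ x ∈ c, x ∈ p.2}) ⊆ p.2 := by
  simp only [Fop_eq, Prod.le_def, Set.union_subset_iff, subset_rfl, and_true]

lemma cpre_append_starPrefixed_cases {X : Γ} {β : List Γ}
    (hX : X ∈ Δ.cpre {α | α ++ β ∈ starPrefixed B A}) :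
    X ∈ Δ.cpre (starPrefixed B A) ∨
      X ∈ Δ.cpre (starPrefixed B A ∪ {c | ∀ x ∈ c, x ∈ B}) ∧ β ∈ starPrefixed B A := by
  by_cases hβ : β ∈ starPrefixed B A
  · exact Or.inr ⟨cpre_mono (fun α hα => (append_mem_starPrefixed.1 hα).imp id And.left) hX, hβ⟩
  · exact Or.inl (cpre_mono (fun α hα =>
      (append_mem_starPrefixed.1 hα).resolve_right fun h => hβ h.2) hX)

lemma cpre_append_starPrefixed_union_cases {X : Γ} {β : List Γ}
    (hX : X ∈ Δ.cpre {α | α ++ β ∈ starPrefixed B A ∪ {c | ∀ x ∈ c, x ∈ B}}) :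
    X ∈ Δ.cpre (starPrefixed B A) ∨
      X ∈ Δ.cpre (starPrefixed B A ∪ {c | ∀ x ∈ c, x ∈ B}) ∧
        β ∈ starPrefixed B A ∪ {c | ∀ x ∈ c, x ∈ B} := by
  by_cases hβ : β ∈ starPrefixed B A ∪ {c | ∀ x ∈ c, x ∈ B}
  · refine Or.inr ⟨cpre_mono (fun α hα => ?_) hX, hβ⟩
    rcases hα with hα | hα
    · exact (append_mem_starPrefixed.1 hα).imp id fun h => h.1
    · exact Or.inr fun x hx => hα x (by simp [hx])
  · refine Or.inl (cpre_mono (fun α hα => ?_) hX)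
    rcases hα with hα | hα
    · exact (append_mem_starPrefixed.1 hα).resolve_right fun h => hβ (Or.inl h.2)
    · exact absurd (Or.inr fun x hx => hα x (by simp [hx])) hβ

lemma attrN_topLang_subset_starPrefixed {p : Set Γ × Set Γ} (hp : Fop Δ ΓT p ≤ p) (n : ℕ) :
    Δ.attrN (topLang ΓT) n ⊆ starPrefixed p.2 p.1 := by
  obtain ⟨⟨hΓT, hA⟩, -, hB⟩ := Fop_le_iff.1 hp
  induction n with
  | zero => exact Set.empty_subset _
  | succ n ih =>
    rintro _ (⟨X, β, rfl, hX⟩ | ⟨X, β, rfl, hX⟩)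
    · exact cons_mem_starPrefixed_of_mem (hΓT hX) β
    rcases cpre_append_starPrefixed_cases
      (cpre_mono (Set.preimage_mono (f := (· ++ β)) ih) hX) with hX | ⟨hX, hβ⟩
    · exact cons_mem_starPrefixed_of_mem (hA hX) β
    · exact cons_mem_starPrefixed (hB hX) hβ

lemma attrN_topLang_union_nil_subset {p : Set Γ × Set Γ} (hp : Fop Δ ΓT p ≤ p) (n : ℕ) :
    Δ.attrN (topLang ΓT ∪ {[]}) n ⊆ starPrefixed p.2 p.1 ∪ {c | ∀ x ∈ c, x ∈ p.2} := by
  obtain ⟨⟨hΓT, hA⟩, -, hB⟩ := Fop_le_iff.1 hp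
  induction n with
  | zero => exact Set.empty_subset _
  | succ n ih =>
    rintro _ ((⟨X, β, rfl, hX⟩ | rfl) | ⟨X, β, rfl, hX⟩)
    · exact Or.inl (cons_mem_starPrefixed_of_mem (hΓT hX) β)
    · exact Or.inr (by simp)
    rcases cpre_append_starPrefixed_union_cases
      (cpre_mono (Set.preimage_mono (f := (· ++ β)) ih) hX) with hX | ⟨hX, hβ⟩
    · exact Or.inl (cons_mem_starPrefixed_of_mem (hA hX) β)
    · exact cons_mem_starPrefixed_union (hB hX) hβ

theorem attr_subset_of_Fop_le {p : Set Γ × Set Γ} (hp : Fop Δ ΓT p ≤ p) :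
    {X | [X] ∈ Δ.attr (topLang ΓT)} ⊆ p.1 ∧ {X | [X] ∈ Δ.attr (topLang ΓT ∪ {[]})} ⊆ p.2 := by
  obtain ⟨-, hΓT, hB⟩ := Fop_le_iff.1 hp
  refine ⟨fun X hX => ?_, fun X hX => ?_⟩
  · obtain ⟨n, hn⟩ := Set.mem_iUnion.1 hX
    exact singleton_mem_starPrefixed.1 (attrN_topLang_subset_starPrefixed hp n hn)
  · obtain ⟨_ | n, hn⟩ := Set.mem_iUnion.1 hX
    · exact absurd hn (Set.notMem_empty _)
    -- `[X] ∈ B*AΓ* ∪ B*` would only give `X ∈ p.1 ∪ p.2`; unfolding one round gives `X ∈ p.2`.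
    rcases hn with (⟨_, _, h, hX⟩ | h) | ⟨_, _, h, hX⟩
    · obtain ⟨rfl, rfl⟩ := List.cons_eq_cons.1 h
      exact hΓT hX
    · simp at h
    · obtain ⟨rfl, rfl⟩ := List.cons_eq_cons.1 h
      exact hB (cpre_mono (fun α hα => attrN_topLang_union_nil_subset hp n (by simpa using hα)) hX)

end FixedPoint

theorem AB_least_fixed_point_of_Fop_general {Γ : Type*} [Fintype Γ] (Δ : BPA Γ)
    (ΓT : Set Γ)
    (A B : Set Γ)
    (hA : A = {X | [X] ∈ Δ.WBoxPos (topLang ΓT)})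
    (hB : B = {X | [X] ∈ Δ.WBoxPos (topLang ΓT ∪ {([] : List Γ)})}) :
    Fop Δ ΓT (A, B) = (A, B) ∧
      ∀ p : Set Γ × Set Γ, Fop Δ ΓT p = p → A ⊆ p.1 ∧ B ⊆ p.2 := by
  simp only [BPA.WBoxPos_eq_attr Δ (topLang ΓT), BPA.WBoxPos_eq_attr Δ (topLang ΓT ∪ {[]})]
    at hA hB
  subst hA hB
  exact ⟨Fop_attr_eq Δ ΓT, fun p hp => attr_subset_of_Fop_le hp.le⟩

/-- The pair `(A,B)` with `A = W_Box(T,>0) ∩ Γ`, `B = W_Box(T_ε,>0) ∩ Γ` is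
the least fixed point of the monotone operator `F` on `2^Γ × 2^Γ`. -/
theorem AB_least_fixed_point_of_Fop {Γ : Type*} [Fintype Γ] (Δ : BPA Γ)
    (ΓT : Set Γ) (hT : ∀ R ∈ ΓT, ∀ α, Δ.rule R α ↔ α = [R])
    (A B : Set Γ)
    (hA : A = {X | [X] ∈ Δ.WBoxPos (topLang ΓT)})
    (hB : B = {X | [X] ∈ Δ.WBoxPos (topLang ΓT ∪ {([] : List Γ)})}) :
    Fop Δ ΓT (A, B) = (A, B) ∧
      ∀ p : Set Γ × Set Γ, Fop Δ ΓT p = p → A ⊆ p.1 ∧ B ⊆ p.2 :=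
  AB_least_fixed_point_of_Fop_general Δ ΓT A B hA hB
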